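/- Fix a real δ > 0 and let W† = {a : ℕ → K | there exists a real ρ > δ with ‖a n‖ · ρ^n → 0 as n → ∞}, the coefficient model of the ring of overconvergent (dagger) functions on the closed disk of radius δ; it is a K-submodule of ℕ → K. Then the formal derivative D maps W† into W†, the map D : W† → W† is surjective, and its kernel consists exactly of the sequences a with a n = 0 for all n ≥ 1. (Equivalently: the closed dagger disk has H⁰_dR = K and H¹_dR = 0; this is the r = 0, n = 1 case of the paper's Lemma 2.1(a).) -/

import Mathlib

/-!
The derivative multiplies the `n`-th coefficient by an integer, of norm `≤ 1` in an ultrametric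
field, and shifts indices, so it preserves every radius of convergence. Its right inverse, the
antiderivative, divides by `n + 1`. By Ostrowski's theorem the norm restricted to `ℚ` is trivial or
a power of a `p`-adic norm, and `|n|_p ≥ 1 / n`, so `‖n + 1‖⁻¹` grows at most polynomially; this
growth is absorbed by passing to a slightly smaller radius, still larger than `δ`. The kernel
consists of the constants because `n + 1 ≠ 0` in characteristic zero.
-/

open Filter Topology

/-- The coefficient model of the ring of overconvergent (dagger) functions on the closed disk of
radius `δ`: sequences `a : ℕ → K` such that `‖a n‖ * ρ ^ n → 0` for some radius `ρ > δ`.  It is a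
`K`-submodule of `ℕ → K`. -/
def DaggerDisk (K : Type*) [NormedField K] (δ : ℝ) (hδ : 0 < δ) : Submodule K (ℕ → K) where
  carrier := {a | ∃ ρ : ℝ, δ < ρ ∧ Tendsto (fun n : ℕ => ‖a n‖ * ρ ^ n) atTop (𝓝 0)}
  zero_mem' := by
    refine ⟨δ + 1, by linarith, ?_⟩
    simp
  add_mem' := by
    rintro a b ⟨ρa, hρa, ha⟩ ⟨ρb, hρb, hb⟩
    refine ⟨min ρa ρb, lt_min hρa hρb, ?_⟩
    have hmin : 0 < min ρa ρb := lt_min (hδ.trans hρa) (hδ.trans hρb)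
    have ha' : Tendsto (fun n : ℕ => ‖a n‖ * (min ρa ρb) ^ n) atTop (𝓝 0) :=
      squeeze_zero (fun n => mul_nonneg (norm_nonneg _) (pow_nonneg hmin.le n))
        (fun n => mul_le_mul_of_nonneg_left
          (pow_le_pow_left₀ hmin.le (min_le_left _ _) n) (norm_nonneg _)) ha
    have hb' : Tendsto (fun n : ℕ => ‖b n‖ * (min ρa ρb) ^ n) atTop (𝓝 0) :=
      squeeze_zero (fun n => mul_nonneg (norm_nonneg _) (pow_nonneg hmin.le n))
        (fun n => mul_le_mul_of_nonneg_left
          (pow_le_pow_left₀ hmin.le (min_le_right _ _) n) (norm_nonneg _)) hb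
    refine squeeze_zero (fun n => mul_nonneg (norm_nonneg _) (pow_nonneg hmin.le n))
      (fun n => ?_) (by simpa using ha'.add hb')
    have h3 : ‖(a + b) n‖ * (min ρa ρb) ^ n ≤ (‖a n‖ + ‖b n‖) * (min ρa ρb) ^ n :=
      mul_le_mul_of_nonneg_right (norm_add_le _ _) (pow_nonneg hmin.le n)
    simpa [add_mul] using h3
  smul_mem' := by
    rintro c a ⟨ρa, hρa, ha⟩
    exact ⟨ρa, hρa, by simpa [norm_mul, mul_assoc] using ha.const_mul ‖c‖⟩

/-- The formal derivative operator `f ↦ df/dT` on coefficient sequences: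
`(D a) n = (n + 1) * a (n + 1)`. -/
def DerN (K : Type*) [NormedField K] : (ℕ → K) →ₗ[K] (ℕ → K) where
  toFun a := fun n => ((n + 1 : ℕ) : K) * a (n + 1)
  map_add' a b := by funext n; simp [mul_add]
  map_smul' c a := by
    funext n
    simp only [Pi.smul_apply, smul_eq_mul, RingHom.id_apply]
    ring

theorem inv_le_padicNorm_natCast (p : ℕ) [Fact p.Prime] {n : ℕ} (hn : n ≠ 0) :
    (n : ℚ)⁻¹ ≤ padicNorm p n := by
  have hp : (0 : ℚ) < p := mod_cast (Fact.out : p.Prime).pos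
  rw [padicNorm.eq_zpow_of_nonzero (by exact_mod_cast hn), padicValRat.of_nat, zpow_neg,
    zpow_natCast]
  gcongr
  exact_mod_cast Nat.le_of_dvd (Nat.pos_of_ne_zero hn) pow_padicValNat_dvd

theorem exists_norm_natCast_inv_le_pow (K : Type*) [NormedField K] [IsUltrametricDist K]
    [CharZero K] : ∃ k : ℕ, ∀ n : ℕ, n ≠ 0 → ‖(n : K)‖⁻¹ ≤ (n : ℝ) ^ k := by
  let f : AbsoluteValue ℚ ℝ :=
    (IsAbsoluteValue.toAbsoluteValue (norm : K → ℝ)).comp (Rat.castHom K).injective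
  have hf (q : ℚ) : f q = ‖(q : K)‖ := rfl
  by_cases hnt : f.IsNontrivial
  · obtain ⟨p, ⟨_, hequiv⟩, -⟩ := Rat.AbsoluteValue.equiv_padic_of_bounded hnt fun n => by
      simpa [hf] using IsUltrametricDist.norm_natCast_le_one K n
    obtain ⟨c, hc, hfc⟩ := Rat.AbsoluteValue.exists_nat_rpow_iff_isEquiv.mpr hequiv
    refine ⟨⌈c⁻¹⌉₊, fun n hn => ?_⟩
    have hn1 : (1 : ℝ) ≤ n := by exact_mod_cast Nat.one_le_iff_ne_zero.mpr hn
    have hnorm : 0 < ‖(n : K)‖ := norm_pos_iff.mpr (Nat.cast_ne_zero.mpr hn)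
    have hpow : (n : ℝ)⁻¹ ≤ ‖(n : K)‖ ^ c := by
      have hfn := hfc n
      simp only [hf, Rat.cast_natCast, Rat.AbsoluteValue.padic_eq_padicNorm] at hfn
      rw [hfn]
      simpa using (Rat.cast_le (K := ℝ)).mpr (inv_le_padicNorm_natCast p hn)
    calc ‖(n : K)‖⁻¹ = ((‖(n : K)‖ ^ c)⁻¹) ^ c⁻¹ := by
          rw [Real.inv_rpow (by positivity), ← Real.rpow_mul hnorm.le, mul_inv_cancel₀ hc.ne',
            Real.rpow_one]
      _ ≤ (n : ℝ) ^ c⁻¹ := by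
          gcongr
          exact inv_le_of_inv_le₀ (by positivity) hpow
      _ ≤ (n : ℝ) ^ (⌈c⁻¹⌉₊ : ℝ) := Real.rpow_le_rpow_of_exponent_le hn1 (Nat.le_ceil _)
      _ = (n : ℝ) ^ ⌈c⁻¹⌉₊ := Real.rpow_natCast _ _
  · refine ⟨0, fun n hn => ?_⟩
    have hfn := (f.not_isNontrivial_iff.mp hnt) n (by exact_mod_cast hn)
    rw [hf, Rat.cast_natCast] at hfn
    simp [hfn]

section DaggerDisk

variable {K : Type*} [NormedField K] {δ : ℝ} {hδ : 0 < δ}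

theorem mem_daggerDisk_of_norm_le {a b : ℕ → K} (ha : a ∈ DaggerDisk K δ hδ)
    (h : ∀ n, ‖b n‖ ≤ ‖a n‖) : b ∈ DaggerDisk K δ hδ := by
  obtain ⟨ρ, hρ, ha⟩ := ha
  have hρ0 : 0 ≤ ρ := (hδ.trans hρ).le
  exact ⟨ρ, hρ, squeeze_zero (fun n => by positivity)
    (fun n => mul_le_mul_of_nonneg_right (h n) (pow_nonneg hρ0 n)) ha⟩

theorem shift_mem_daggerDisk_iff {a : ℕ → K} :
    (fun n => a (n + 1)) ∈ DaggerDisk K δ hδ ↔ a ∈ DaggerDisk K δ hδ := by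
  refine exists_congr fun ρ => and_congr_right fun hρ => ?_
  calc _ ↔ Tendsto (fun n : ℕ => ρ • (‖a (n + 1)‖ * ρ ^ n)) atTop (𝓝 (ρ • 0)) :=
        (tendsto_const_smul_iff₀ (hδ.trans hρ).ne').symm
    _ ↔ _ := by
        rw [smul_zero, ← tendsto_add_atTop_iff_nat 1 (f := fun n => ‖a n‖ * ρ ^ n)]
        simp only [smul_eq_mul, pow_succ, mul_left_comm ρ, mul_comm _ ρ]

theorem mem_daggerDisk_of_norm_le_mul_pow {a b : ℕ → K} (k : ℕ) (ha : a ∈ DaggerDisk K δ hδ)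
    (h : ∀ n, ‖b n‖ ≤ ‖a n‖ * ((n : ℝ) + 1) ^ k) : b ∈ DaggerDisk K δ hδ := by
  obtain ⟨ρ, hρ, ha⟩ := ha
  have hρ0 : 0 < ρ := hδ.trans hρ
  -- The weight is absorbed by the geometric factor `(ρ' / ρ) ^ n` for any radius `δ < ρ' < ρ`.
  obtain ⟨ρ', hδρ', hρ'ρ⟩ := exists_between hρ
  set r := ρ' / ρ with hr
  have hr0 : 0 < r := div_pos (hδ.trans hδρ') hρ0
  have hr1 : r < 1 := (div_lt_one hρ0).mpr hρ'ρ
  have hweight : Tendsto (fun n : ℕ => ((n : ℝ) + 1) ^ k * r ^ n) atTop (𝓝 0) := by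
    have := ((tendsto_add_atTop_iff_nat 1).mpr
      (tendsto_pow_const_mul_const_pow_of_lt_one k hr0.le hr1)).mul_const r⁻¹
    simpa [pow_succ, mul_assoc, hr0.ne'] using this
  have hρ'0 : 0 ≤ ρ' := (hδ.trans hδρ').le
  refine ⟨ρ', hδρ', squeeze_zero (fun n => by positivity) (fun n => ?_)
    (by simpa using ha.mul hweight)⟩
  calc ‖b n‖ * ρ' ^ n ≤ ‖a n‖ * ((n : ℝ) + 1) ^ k * ρ' ^ n := by gcongr; exact h n
    _ = ‖a n‖ * ρ ^ n * (((n : ℝ) + 1) ^ k * r ^ n) := by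
        rw [hr, div_pow]
        field_simp

end DaggerDisk

section Derivative

variable {K : Type*} [NormedField K] {δ : ℝ} {hδ : 0 < δ}

@[simp]
theorem derN_apply (a : ℕ → K) (n : ℕ) : DerN K a n = ((n + 1 : ℕ) : K) * a (n + 1) :=
  rfl

theorem derN_eq_zero_iff [CharZero K] {a : ℕ → K} : DerN K a = 0 ↔ ∀ n : ℕ, 1 ≤ n → a n = 0 := by
  simp only [funext_iff, derN_apply, Pi.zero_apply, mul_eq_zero, Nat.cast_eq_zero,
    Nat.succ_ne_zero, false_or]
  exact ⟨fun h n hn => by simpa [Nat.sub_add_cancel hn] using h (n - 1),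
    fun h n => h (n + 1) n.succ_pos⟩

theorem derN_mem_daggerDisk [IsUltrametricDist K] {a : ℕ → K}
    (ha : a ∈ DaggerDisk K δ hδ) : DerN K a ∈ DaggerDisk K δ hδ :=
  mem_daggerDisk_of_norm_le (shift_mem_daggerDisk_iff.mpr ha) fun n => by
    rw [derN_apply, norm_mul]
    exact mul_le_of_le_one_left (norm_nonneg _) (IsUltrametricDist.norm_natCast_le_one K _)

def antiderivN (b : ℕ → K) : ℕ → K
  | 0 => 0
  | n + 1 => b n / ((n + 1 : ℕ) : K)

theorem derN_antiderivN [CharZero K] (b : ℕ → K) : DerN K (antiderivN b) = b := by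
  funext n
  exact mul_div_cancel₀ (b n) (Nat.cast_ne_zero.mpr n.succ_ne_zero)

theorem antiderivN_mem_daggerDisk [IsUltrametricDist K] [CharZero K] {b : ℕ → K}
    (hb : b ∈ DaggerDisk K δ hδ) : antiderivN b ∈ DaggerDisk K δ hδ := by
  obtain ⟨k, hk⟩ := exists_norm_natCast_inv_le_pow K
  refine shift_mem_daggerDisk_iff.mp (mem_daggerDisk_of_norm_le_mul_pow k hb fun n => ?_)
  rw [antiderivN, norm_div, div_eq_mul_inv]
  gcongr
  exact_mod_cast hk (n + 1) n.succ_ne_zero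

end Derivative

/-- **The closed dagger disk has `H⁰_dR = K` and `H¹_dR = 0`** (the `r = 0`, `n = 1` case of
Lemma 2.1(a) of the paper): the formal derivative maps the ring of overconvergent functions on
the closed disk of radius `δ` into itself, it is surjective on it, and its kernel consists exactly
of the constants, i.e. of the sequences vanishing in all degrees `≥ 1`. -/
theorem daggerDisk_deRham
    (K : Type*) [NormedField K] [IsUltrametricDist K] [CharZero K]
    (δ : ℝ) (hδ : 0 < δ) :
    (∀ a ∈ DaggerDisk K δ hδ, DerN K a ∈ DaggerDisk K δ hδ) ∧
      (∀ b ∈ DaggerDisk K δ hδ, ∃ a ∈ DaggerDisk K δ hδ, DerN K a = b) ∧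
      (∀ a ∈ DaggerDisk K δ hδ, (DerN K a = 0 ↔ ∀ n : ℕ, 1 ≤ n → a n = 0)) :=
  ⟨fun _ ha => derN_mem_daggerDisk ha,
    fun b hb => ⟨antiderivN b, antiderivN_mem_daggerDisk hb, derN_antiderivN b⟩,
    fun _ _ => derN_eq_zero_iff⟩
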